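/- arXiv:1112.2861 — 4 statements merged into one kernel-verified Lean document; each statement's English description precedes it below -/
import Mathlib

section
/- Let χ be a complete simple game on n voters, numbered so that i ⊒ j whenever 1 ≤ i < j ≤ n, and let α ≥ 1 be such that χ is α-roughly weighted. Then there exist weights w_1 ≥ w_2 ≥ … ≥ w_n ≥ 0 with w_i = w_j whenever i □ j (i.e., voters of the same equivalence class receive the same weight), such that ∑_{i∈S} w_i ≥ 1 for every winning coalition S and ∑_{i∈S} w_i ≤ α for every losing coalition S. -/
/-!
Among all rearrangements `w ∘ π` of a rough weighting that are still rough weightings, take one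
minimising `∑ k, k * w (π k)`. It is non-increasing: if `w (π i) < w (π j)` for some `i < j`,
swapping the weights of `i` and `j` lowers that sum, and since `i ⊒ j` the swap keeps winning coalitions at
weight `≥ 1` and losing ones at weight `≤ α`. Averaging a rough weighting over the automorphism
group of the game gives another one, now equal on voters `i □ j` because the transposition of
two equivalent voters is an automorphism; automorphisms preserve `⊒`, so the average stays
non-increasing. Finally negative weights can be raised to `0`: the positive part of a losing
coalition is losing by monotonicity.
-/

open Finset

/-- `f` is `α`-roughly weighted: there are real weights such that every winning
coalition has weight at least `1` and every losing coalition weight at most `α`. -/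
def RoughlyWeighted {n : ℕ} (f : Finset (Fin n) → Bool) (α : ℝ) : Prop :=
  ∃ w : Fin n → ℝ,
    (∀ S : Finset (Fin n), f S = true → 1 ≤ ∑ i ∈ S, w i) ∧
    (∀ S : Finset (Fin n), f S = false → ∑ i ∈ S, w i ≤ α)

/-- The critical threshold value `μ(f)`: the smallest `α ≥ 1` such that `f` is
`α`-roughly weighted. -/
noncomputable def mu {n : ℕ} (f : Finset (Fin n) → Bool) : ℝ :=
  sInf {α : ℝ | 1 ≤ α ∧ RoughlyWeighted f α}

/-- A simple game: monotone, the empty coalition loses and the grand coalition wins. -/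
def SimpleGame {n : ℕ} (χ : Finset (Fin n) → Bool) : Prop :=
  χ ∅ = false ∧ χ Finset.univ = true ∧
    ∀ S T : Finset (Fin n), S ⊆ T → χ S = true → χ T = true

/-- Isbell's desirability relation: `i ⊒ j` iff replacing `j` by `i` in any
coalition containing `j` but not `i` preserves winning. -/
def Desirable {n : ℕ} (χ : Finset (Fin n) → Bool) (i j : Fin n) : Prop :=
  ∀ S : Finset (Fin n), j ∈ S → i ∉ S →
    χ S = true → χ (insert i (S.erase j)) = true

def IsRoughWeighting {n : ℕ} (χ : Finset (Fin n) → Bool) (α : ℝ) (w : Fin n → ℝ) :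
    Prop :=
  (∀ S : Finset (Fin n), χ S = true → 1 ≤ ∑ i ∈ S, w i) ∧
    (∀ S : Finset (Fin n), χ S = false → ∑ i ∈ S, w i ≤ α)

namespace Finset

variable {ι : Type*} [DecidableEq ι] {i j : ι} {S : Finset ι}

lemma mem_image_swap {x : ι} : x ∈ S.image (Equiv.swap i j) ↔ Equiv.swap i j x ∈ S := by
  simp [Equiv.swap_apply_eq_iff]

lemma image_swap_of_mem_iff (h : i ∈ S ↔ j ∈ S) : S.image (Equiv.swap i j) = S := by
  ext x
  rw [mem_image_swap, Equiv.swap_apply_def]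
  split_ifs with hi hj
  · exact hi ▸ h.symm
  · exact hj ▸ h
  · rfl

lemma image_swap_of_mem_of_notMem (hj : j ∈ S) (hi : i ∉ S) :
    S.image (Equiv.swap i j) = insert i (S.erase j) := by
  ext x
  rw [mem_image_swap, mem_insert, mem_erase, Equiv.swap_apply_def]
  split_ifs with hxi hxj
  · simp [hxi, hj]
  · simp [hxj, hi, ne_of_mem_of_not_mem hj hi]
  · simp [hxi, hxj]

lemma insert_erase_insert_erase (hi : i ∈ S) (hj : j ∉ S) :
    insert i ((insert j (S.erase i)).erase j) = S := by
  rw [erase_insert fun h => hj (mem_of_mem_erase h), insert_erase hi]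

end Finset

section Voters

open scoped BigOperators

variable {n : ℕ} {χ : Finset (Fin n) → Bool} {α : ℝ} {w : Fin n → ℝ} {i j : Fin n}

lemma sum_mul_comp_swap_lt {v : Fin n → ℝ} (hij : i < j) (hv : v i < v j) :
    ∑ k : Fin n, (k : ℝ) * v (Equiv.swap i j k) < ∑ k : Fin n, (k : ℝ) * v k := by
  set τ := Equiv.swap i j
  have hreindex : ∑ k : Fin n, (k : ℝ) * v (τ k) = ∑ k : Fin n, (τ k : ℝ) * v k := by
    rw [← Equiv.sum_comp τ fun k => (τ k : ℝ) * v k]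
    simp [τ]
  have hdiff : ∑ k : Fin n, ((τ k : ℝ) - k) * v k = ((j : ℝ) - i) * (v i - v j) := by
    rw [Fintype.sum_eq_add i j hij.ne fun k hk => by
      rw [Equiv.swap_apply_of_ne_of_ne hk.1 hk.2, sub_self, zero_mul]]
    simp only [τ, Equiv.swap_apply_left, Equiv.swap_apply_right]
    ring
  have hneg : ((j : ℝ) - i) * (v i - v j) < 0 :=
    mul_neg_of_pos_of_neg (sub_pos.2 (by exact_mod_cast hij)) (sub_neg.2 hv)
  simp only [sub_mul, sum_sub_distrib] at hdiff
  linarith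

lemma IsRoughWeighting.comp_swap (hd : Desirable χ i j) (hle : w i ≤ w j)
    (hw : IsRoughWeighting χ α w) : IsRoughWeighting χ α (w ∘ Equiv.swap i j) := by
  have hreplace : ∀ S : Finset (Fin n), j ∈ S → i ∉ S →
      ∑ k ∈ insert i (S.erase j), w k ≤ ∑ k ∈ S, w k := fun S hj hi => by
    rw [sum_insert fun h => hi (mem_of_mem_erase h), sum_erase_eq_sub hj]
    linarith
  suffices ∀ S : Finset (Fin n),
      (χ S = true → 1 ≤ ∑ k ∈ S.image (Equiv.swap i j), w k) ∧
        (χ S = false → ∑ k ∈ S.image (Equiv.swap i j), w k ≤ α) by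
    have hsum (S : Finset (Fin n)) :
        ∑ k ∈ S, (w ∘ Equiv.swap i j) k = ∑ k ∈ S.image (Equiv.swap i j), w k :=
      (sum_image fun x _ y _ h => (Equiv.swap i j).injective h).symm
    exact ⟨fun S => hsum S ▸ (this S).1, fun S => hsum S ▸ (this S).2⟩
  intro S
  by_cases hi : i ∈ S <;> by_cases hj : j ∈ S
  · rw [image_swap_of_mem_iff (iff_of_true hi hj)]
    exact ⟨hw.1 S, hw.2 S⟩
  · rw [Equiv.swap_comm, image_swap_of_mem_of_notMem hi hj]
    set T := insert j (S.erase i)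
    have hjT : j ∈ T := mem_insert_self j _
    have hiT : i ∉ T := by simp [T, ne_of_mem_of_not_mem hi hj]
    have hTS : insert i (T.erase j) = S := insert_erase_insert_erase hi hj
    refine ⟨fun hS => (hw.1 S hS).trans (hTS ▸ hreplace T hjT hiT), fun hS => hw.2 T ?_⟩
    exact Bool.eq_false_iff.2 fun hT => by simpa [hTS, hS] using hd T hjT hiT hT
  · rw [image_swap_of_mem_of_notMem hj hi]
    exact ⟨fun hS => hw.1 _ (hd S hj hi hS), fun hS => (hreplace S hj hi).trans (hw.2 S hS)⟩
  · rw [image_swap_of_mem_iff (iff_of_false hi hj)]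
    exact ⟨hw.1 S, hw.2 S⟩

lemma IsRoughWeighting.exists_antitone (hsorted : ∀ i j : Fin n, i < j → Desirable χ i j)
    (hw : IsRoughWeighting χ α w) : ∃ v, Antitone v ∧ IsRoughWeighting χ α v := by
  classical
  obtain ⟨π, hπ, hmin⟩ :=
    (univ.filter fun π : Equiv.Perm (Fin n) => IsRoughWeighting χ α (w ∘ π)).exists_min_image
      (fun π => ∑ k : Fin n, (k : ℝ) * w (π k)) ⟨1, by simpa using hw⟩
  rw [mem_filter] at hπ
  refine ⟨w ∘ π, antitone_iff_forall_lt.2 fun i j hij => not_lt.1 fun hlt => ?_, hπ.2⟩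
  have hswap := hπ.2.comp_swap (hsorted i j hij) hlt.le
  exact (sum_mul_comp_swap_lt hij hlt).not_ge
    (hmin (π * Equiv.swap i j) (mem_filter.2 ⟨mem_univ _, hswap⟩))

lemma IsRoughWeighting.max_zero (hmono : ∀ S T, S ⊆ T → χ S = true → χ T = true)
    (hw : IsRoughWeighting χ α w) : IsRoughWeighting χ α fun k => max (w k) 0 := by
  refine ⟨fun S hS => (hw.1 S hS).trans (sum_le_sum fun k _ => le_max_left _ _),
    fun S hS => ?_⟩
  have hpos : ∑ k ∈ S, max (w k) 0 = ∑ k ∈ S.filter (fun k => 0 < w k), w k := by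
    rw [sum_filter]
    refine sum_congr rfl fun k _ => ?_
    split_ifs with h
    exacts [max_eq_left h.le, max_eq_right (not_lt.1 h)]
  rw [hpos]
  refine hw.2 _ (Bool.eq_false_iff.2 fun hpos => ?_)
  simp [hmono _ _ (filter_subset _ _) hpos] at hS

def automorphisms (χ : Finset (Fin n) → Bool) : Subgroup (Equiv.Perm (Fin n)) where
  carrier := {π | ∀ S, χ (S.image π) = χ S}
  mul_mem' {π σ} hπ hσ S := by rw [Equiv.Perm.coe_mul, ← image_image, hπ, hσ]
  one_mem' S := by simp
  inv_mem' {π} hπ S := by rw [← hπ, image_image]; simp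

lemma mem_automorphisms {π : Equiv.Perm (Fin n)} :
    π ∈ automorphisms χ ↔ ∀ S, χ (S.image π) = χ S :=
  Iff.rfl

instance : DecidablePred (· ∈ automorphisms χ) :=
  fun _ => decidable_of_iff _ mem_automorphisms.symm

lemma Desirable.apply_automorphism {π : Equiv.Perm (Fin n)} (hπ : π ∈ automorphisms χ)
    (h : Desirable χ i j) : Desirable χ (π i) (π j) := by
  intro S hj hi hS
  set T := S.image ⇑π⁻¹
  have hT : T.image π = S := by simp [T, image_image]
  have hmem (x : Fin n) : x ∈ T ↔ π x ∈ S := by simp [T, Equiv.symm_apply_eq]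
  have := h T ((hmem j).2 hj) (mt (hmem i).1 hi) (by rwa [← hπ, hT])
  rwa [← hπ, image_insert, image_erase π.injective, hT] at this

lemma Desirable.replace_eq (hij : Desirable χ i j) (hji : Desirable χ j i) {S : Finset (Fin n)}
    (hj : j ∈ S) (hi : i ∉ S) : χ (insert i (S.erase j)) = χ S := by
  refine Bool.eq_iff_iff.2 ⟨fun hT => ?_, hij S hj hi⟩
  have hjT : j ∉ insert i (S.erase j) := by simp [ne_of_mem_of_not_mem hj hi]
  have := hji _ (mem_insert_self i _) hjT hT
  rwa [insert_erase_insert_erase hj hi] at this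

lemma swap_mem_automorphisms (hij : Desirable χ i j) (hji : Desirable χ j i) :
    Equiv.swap i j ∈ automorphisms χ := by
  intro S
  by_cases hi : i ∈ S <;> by_cases hj : j ∈ S
  · rw [image_swap_of_mem_iff (iff_of_true hi hj)]
  · rw [Equiv.swap_comm, image_swap_of_mem_of_notMem hi hj, hji.replace_eq hij hi hj]
  · rw [image_swap_of_mem_of_notMem hj hi, hij.replace_eq hji hj hi]
  · rw [image_swap_of_mem_iff (iff_of_false hi hj)]

noncomputable def automorphismAverage (χ : Finset (Fin n) → Bool) (w : Fin n → ℝ)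
    (k : Fin n) : ℝ :=
  𝔼 π : automorphisms χ, w ((π : Equiv.Perm (Fin n)) k)

lemma automorphismAverage_apply_of_mem {π : Equiv.Perm (Fin n)} (hπ : π ∈ automorphisms χ)
    (k : Fin n) : automorphismAverage χ w (π k) = automorphismAverage χ w k :=
  Fintype.expect_equiv (Equiv.mulRight ⟨π, hπ⟩) _ _ fun _ => rfl

lemma automorphismAverage_eq_of_desirable (hij : Desirable χ i j) (hji : Desirable χ j i) :
    automorphismAverage χ w i = automorphismAverage χ w j := by
  simpa using automorphismAverage_apply_of_mem (w := w) (swap_mem_automorphisms hij hji) j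

lemma isRoughWeighting_automorphismAverage (hw : IsRoughWeighting χ α w) :
    IsRoughWeighting χ α (automorphismAverage χ w) := by
  have hsum : ∀ S : Finset (Fin n), ∑ k ∈ S, automorphismAverage χ w k =
      𝔼 π : automorphisms χ, ∑ k ∈ S.image (π : Equiv.Perm (Fin n)), w k := by
    intro S
    simp only [automorphismAverage, ← expect_sum_comm]
    exact expect_congr rfl fun π _ => (sum_image fun x _ y _ h => π.1.injective h).symm
  refine ⟨fun S hS => ?_, fun S hS => ?_⟩ <;> rw [hsum]
  · exact le_expect univ_nonempty fun π _ => hw.1 _ ((π.2 S).trans hS)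
  · exact expect_le univ_nonempty fun π _ => hw.2 _ ((π.2 S).trans hS)

lemma antitone_automorphismAverage (hsorted : ∀ i j : Fin n, i < j → Desirable χ i j)
    (hw : Antitone w) : Antitone (automorphismAverage χ w) := by
  refine antitone_iff_forall_lt.2 fun i j hij => ?_
  by_cases hji : Desirable χ j i
  · exact (automorphismAverage_eq_of_desirable (hsorted i j hij) hji).ge
  refine expect_le_expect fun π _ => hw (not_lt.1 fun hlt => hji ?_)
  simpa using (hsorted _ _ hlt).apply_automorphism (inv_mem π.2)

end Voters

theorem complete_simple_game_class_weights_general (n : ℕ) (χ : Finset (Fin n) → Bool)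
    (hχ : SimpleGame χ)
    (hsorted : ∀ i j : Fin n, i < j → Desirable χ i j)
    (α : ℝ) (h : RoughlyWeighted χ α) :
    ∃ w : Fin n → ℝ, (∀ i j : Fin n, i ≤ j → w j ≤ w i) ∧ (∀ i : Fin n, 0 ≤ w i) ∧
      (∀ i j : Fin n, Desirable χ i j → Desirable χ j i → w i = w j) ∧
      (∀ S : Finset (Fin n), χ S = true → 1 ≤ ∑ i ∈ S, w i) ∧
      (∀ S : Finset (Fin n), χ S = false → ∑ i ∈ S, w i ≤ α) := by
  obtain ⟨w, hw⟩ := h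
  obtain ⟨v, hv_anti, hv⟩ := IsRoughWeighting.exists_antitone hsorted hw
  have hfinal := (isRoughWeighting_automorphismAverage hv).max_zero hχ.2.2
  refine ⟨fun k => max (automorphismAverage χ v k) 0, fun i j hij => ?_,
    fun k => le_max_right _ _, fun i j hij hji => ?_, hfinal.1, hfinal.2⟩
  · exact max_le_max (antitone_automorphismAverage hsorted hv_anti hij) le_rfl
  · exact congrArg (max · 0) (automorphismAverage_eq_of_desirable hij hji)

/-- an `α`-roughly weighted complete simple game (voters numbered with
decreasing desirability) admits an `α`-rough weighting with
`w 1 ≥ … ≥ w n ≥ 0` where equally desirable voters get equal weights. -/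
theorem complete_simple_game_class_weights (n : ℕ) (χ : Finset (Fin n) → Bool)
    (hχ : SimpleGame χ)
    (hcomplete : ∀ i j : Fin n, Desirable χ i j ∨ Desirable χ j i)
    (hsorted : ∀ i j : Fin n, i < j → Desirable χ i j)
    (α : ℝ) (hα : 1 ≤ α) (h : RoughlyWeighted χ α) :
    ∃ w : Fin n → ℝ, (∀ i j : Fin n, i ≤ j → w j ≤ w i) ∧ (∀ i : Fin n, 0 ≤ w i) ∧
      (∀ i j : Fin n, Desirable χ i j → Desirable χ j i → w i = w j) ∧
      (∀ S : Finset (Fin n), χ S = true → 1 ≤ ∑ i ∈ S, w i) ∧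
      (∀ S : Finset (Fin n), χ S = false → ∑ i ∈ S, w i ≤ α) :=
  complete_simple_game_class_weights_general n χ hχ hsorted α h
end

section
/- Let f : 2^N → {0,1} satisfy f(∅) = 0 and f(N) = 1, where N = {1,…,n}. Then μ(f) ≤ 1 + CoS(f). Concretely: if Δ ≥ 0 and p_1,…,p_n ≥ 0 satisfy ∑_{i∈N} p_i = 1 + Δ and ∑_{i∈S} p_i ≥ f(S) for all S ⊆ N, then f is (1+Δ)-roughly weighted. -/
/-!
A stabilizing payoff vector `p` with `∑ pᵢ = 1 + Δ` is itself a system of rough weights: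
winning coalitions get at least `1`, and since `p ≥ 0` every coalition, losing ones included,
gets at most `∑ pᵢ = 1 + Δ`. Hence `μ(f) ≤ 1 + Δ` for every admissible `Δ`, and taking the
infimum over `Δ` gives `μ(f) ≤ 1 + CoS(f)`.
-/

open Finset

/-- The cost of stability `CoS(f)`: the minimum external payment `Δ ≥ 0` admitting
a stabilizing payoff vector. -/
noncomputable def CoS {n : ℕ} (f : Finset (Fin n) → Bool) : ℝ :=
  sInf {Δ : ℝ | 0 ≤ Δ ∧ ∃ p : Fin n → ℝ, (∀ i : Fin n, 0 ≤ p i) ∧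
    (∑ i : Fin n, p i) = 1 + Δ ∧
    ∀ S : Finset (Fin n), (if f S = true then (1 : ℝ) else 0) ≤ ∑ i ∈ S, p i}

variable {n : ℕ} {f : Finset (Fin n) → Bool}

def stabilizingPayments (f : Finset (Fin n) → Bool) : Set ℝ :=
  {Δ : ℝ | 0 ≤ Δ ∧ ∃ p : Fin n → ℝ, (∀ i : Fin n, 0 ≤ p i) ∧
    (∑ i : Fin n, p i) = 1 + Δ ∧
    ∀ S : Finset (Fin n), (if f S = true then (1 : ℝ) else 0) ≤ ∑ i ∈ S, p i}

theorem CoS_eq_sInf_stabilizingPayments : CoS f = sInf (stabilizingPayments f) := rfl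

theorem roughlyWeighted_of_stabilizing {α : ℝ} {p : Fin n → ℝ} (hp : ∀ i, 0 ≤ p i)
    (hsum : ∑ i, p i ≤ α)
    (hstab : ∀ S : Finset (Fin n), (if f S = true then (1 : ℝ) else 0) ≤ ∑ i ∈ S, p i) :
    RoughlyWeighted f α :=
  ⟨p, fun S hS => by simpa [hS] using hstab S,
    fun _ _ => (sum_le_univ_sum_of_nonneg hp).trans hsum⟩

theorem mu_le_of_roughlyWeighted {α : ℝ} (hα : 1 ≤ α) (h : RoughlyWeighted f α) : mu f ≤ α :=
  csInf_le ⟨1, fun _ hβ => hβ.1⟩ ⟨hα, h⟩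

theorem mu_le_one_add_of_mem_stabilizingPayments {Δ : ℝ} (hΔ : Δ ∈ stabilizingPayments f) :
    mu f ≤ 1 + Δ := by
  obtain ⟨hΔ0, p, hp, hsum, hstab⟩ := hΔ
  exact mu_le_of_roughlyWeighted (by linarith) (roughlyWeighted_of_stabilizing hp hsum.le hstab)

/-- Paying every player `1` stabilizes `f`, at external cost `n - 1`. -/
theorem stabilizingPayments_nonempty (hf0 : f ∅ = false) (hfN : f univ = true) :
    (stabilizingPayments f).Nonempty := by
  have hn : (univ : Finset (Fin n)).Nonempty :=
    nonempty_iff_ne_empty.2 fun h => by simp [h, hf0] at hfN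
  refine ⟨n - 1, ?_, fun _ => 1, fun _ => zero_le_one, by simp, fun S => ?_⟩
  · simpa [Nat.one_le_iff_ne_zero, Nat.pos_iff_ne_zero] using hn.card_pos
  · split_ifs with hS
    · have hSne : S.Nonempty := nonempty_iff_ne_empty.2 fun h => by simp [h, hf0] at hS
      simpa using hSne.card_pos
    · simp

/-- `μ(f) ≤ 1 + CoS(f)`; concretely, any feasible payoff vector with
external payment `Δ` witnesses that `f` is `(1+Δ)`-roughly weighted. -/
theorem critical_threshold_le_one_add_cost_of_stability (n : ℕ)
    (f : Finset (Fin n) → Bool) (hf0 : f ∅ = false) (hfN : f Finset.univ = true) :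
    mu f ≤ 1 + CoS f ∧
    ∀ (Δ : ℝ) (p : Fin n → ℝ), 0 ≤ Δ → (∀ i : Fin n, 0 ≤ p i) →
      (∑ i : Fin n, p i) = 1 + Δ →
      (∀ S : Finset (Fin n), (if f S = true then (1 : ℝ) else 0) ≤ ∑ i ∈ S, p i) →
      RoughlyWeighted f (1 + Δ) := by
  refine ⟨?_, fun Δ p _ hp hsum hstab => roughlyWeighted_of_stabilizing hp hsum.le hstab⟩
  rw [CoS_eq_sInf_stabilizingPayments, ← sub_le_iff_le_add']
  exact le_csInf (stabilizingPayments_nonempty hf0 hfN) fun _ hΔ =>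
    sub_le_iff_le_add'.2 (mu_le_one_add_of_mem_stabilizingPayments hΔ)
end

section
/- For every integer n ≥ 4 there exists a simple game χ on n voters with μ(χ) ≥ ⌊n²/4⌋ / n; that is, χ is not α-roughly weighted for any real α with 1 ≤ α < ⌊n²/4⌋ / n. -/
open Finset

theorem Nat.div_two_mul_sub_div_two (n : ℕ) : n / 2 * (n - n / 2) = n ^ 2 / 4 := by
  rcases Nat.even_or_odd' n with ⟨m, rfl | rfl⟩
  · rw [show 2 * m / 2 = m by omega, show 2 * m - m = m by omega,
      show (2 * m) ^ 2 = 4 * (m * m) by ring, Nat.mul_div_cancel_left _ four_pos]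
  · rw [show (2 * m + 1) / 2 = m by omega, show 2 * m + 1 - m = m + 1 by omega,
      show (2 * m + 1) ^ 2 = 1 + 4 * (m * (m + 1)) by ring, Nat.add_mul_div_left _ _ four_pos]
    simp

section RoughlyWeighted

variable {n : ℕ} {f : Finset (Fin n) → Bool}

theorem RoughlyWeighted.mono {α β : ℝ} (h : RoughlyWeighted f α) (hαβ : α ≤ β) :
    RoughlyWeighted f β :=
  let ⟨w, hwin, hlose⟩ := h
  ⟨w, hwin, fun S hS => (hlose S hS).trans hαβ⟩

theorem roughlyWeighted_natCast (hf : f ∅ = false) : RoughlyWeighted f n := by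
  refine ⟨fun _ => 1, fun S hS => ?_, fun S _ => ?_⟩
  · have hS : S.Nonempty := nonempty_iff_ne_empty.mpr (by rintro rfl; simp [hf] at hS)
    simpa using hS.card_pos
  · simpa using card_le_univ S

theorem le_mu {c : ℝ} (hf : f ∅ = false) (h : ∀ α, RoughlyWeighted f α → c ≤ α) :
    c ≤ mu f :=
  le_csInf ⟨max 1 n, le_max_left _ _, (roughlyWeighted_natCast hf).mono (le_max_right _ _)⟩
    fun α hα => h α hα.2

end RoughlyWeighted

section CrossingGame

variable {n : ℕ} (A : Finset (Fin n))

def crossingGame (S : Finset (Fin n)) : Bool :=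
  decide ((S ∩ A).Nonempty ∧ (S \ A).Nonempty)

variable {A}

theorem crossingGame_eq_true {S : Finset (Fin n)} :
    crossingGame A S = true ↔ (S ∩ A).Nonempty ∧ (S \ A).Nonempty := by
  simp [crossingGame]

theorem simpleGame_crossingGame (hA : A.Nonempty) (hAc : Aᶜ.Nonempty) :
    SimpleGame (crossingGame A) := by
  refine ⟨by simp [crossingGame], ?_, fun S T hST hS => ?_⟩
  · simpa [crossingGame_eq_true, ← compl_eq_univ_sdiff] using ⟨hA, hAc⟩
  · rw [crossingGame_eq_true] at hS ⊢
    exact ⟨hS.1.mono (inter_subset_inter_right hST), hS.2.mono (sdiff_subset_sdiff hST le_rfl)⟩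

theorem RoughlyWeighted.card_mul_card_compl_le {α : ℝ}
    (h : RoughlyWeighted (crossingGame A) α) : ((#A * #Aᶜ : ℕ) : ℝ) ≤ n * α := by
  obtain ⟨w, hwin, hlose⟩ := h
  have hA : ∑ a ∈ A, w a ≤ α := hlose A (by simp [crossingGame])
  have hAc : ∑ b ∈ Aᶜ, w b ≤ α := hlose Aᶜ (by simp [crossingGame, inter_comm, inter_compl])
  have hpair : ∀ a ∈ A, ∀ b ∈ Aᶜ, 1 ≤ w a + w b := by
    intro a ha b hb
    have hab : a ≠ b := by rintro rfl; exact mem_compl.mp hb ha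
    rw [← sum_pair hab]
    exact hwin _ (crossingGame_eq_true.mpr ⟨⟨a, by simp [ha]⟩, ⟨b, by simpa using mem_compl.mp hb⟩⟩)
  have hcard : (#A : ℝ) + #Aᶜ = n := by
    exact_mod_cast (card_add_card_compl A).trans (Fintype.card_fin n)
  calc ((#A * #Aᶜ : ℕ) : ℝ) = ∑ a ∈ A, ∑ b ∈ Aᶜ, (1 : ℝ) := by simp
    _ ≤ ∑ a ∈ A, ∑ b ∈ Aᶜ, (w a + w b) := sum_le_sum fun a ha => sum_le_sum (hpair a ha)
    _ = #Aᶜ * ∑ a ∈ A, w a + #A * ∑ b ∈ Aᶜ, w b := by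
      simp only [sum_add_distrib, sum_const, nsmul_eq_mul, mul_sum]
    _ ≤ #Aᶜ * α + #A * α := by gcongr
    _ = n * α := by rw [← hcard]; ring

end CrossingGame

/-- for every `n ≥ 4` there is a simple game on `n` voters whose
critical threshold value is at least `⌊n²/4⌋ / n`. -/
theorem exists_simple_game_large_critical_threshold (n : ℕ) (hn : 4 ≤ n) :
    ∃ χ : Finset (Fin n) → Bool, SimpleGame χ ∧
      ((n ^ 2 / 4 : ℕ) : ℝ) / (n : ℝ) ≤ mu χ ∧
      ∀ α : ℝ, 1 ≤ α → α < ((n ^ 2 / 4 : ℕ) : ℝ) / (n : ℝ) →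
        ¬ RoughlyWeighted χ α := by
  obtain ⟨A, -, hA⟩ := exists_subset_card_eq (s := (univ : Finset (Fin n))) (n := n / 2)
    (by rw [card_univ, Fintype.card_fin]; omega)
  have hAc : #Aᶜ = n - n / 2 := by simp [card_compl, hA]
  have hbound : ∀ α, RoughlyWeighted (crossingGame A) α → ((n ^ 2 / 4 : ℕ) : ℝ) / n ≤ α := by
    intro α hα
    rw [div_le_iff₀ (by positivity), mul_comm, ← Nat.div_two_mul_sub_div_two, ← hAc, ← hA]
    exact hα.card_mul_card_compl_le
  refine ⟨crossingGame A, simpleGame_crossingGame ?_ ?_, le_mu (by simp [crossingGame]) hbound,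
    fun α _ hlt hα => (hbound α hα).not_gt hlt⟩
  · exact card_pos.mp (by omega)
  · exact card_pos.mp (by omega)
end

section
/- For every integer k ≥ 2 there exists a strong simple game χ on n = 2k voters with μ(χ) ≥ k/2; that is, χ is not α-roughly weighted for any real α with 1 ≤ α < k/2. -/
open Finset

/-- A simple game is strong if the complement of every losing coalition is winning. -/
def Strong {n : ℕ} (χ : Finset (Fin n) → Bool) : Prop :=
  ∀ S : Finset (Fin n), χ S = false → χ Sᶜ = true

/-!
Pair the `2k` voters into `k` pairs. A coalition wins if it contains a whole pair, or if it is
a transversal (one voter from each pair) whose choices have even parity on a fixed set `A` of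
pairs of odd size. Complementing a transversal flips its parity because `#A` is odd, which makes
the game strong. Every pair wins, so has weight at least `1`. If `v` is an odd transversal that
picks the heavier voter of some pair `j₀ ∈ A`, then flipping `v` everywhere except at `j₀` gives
a second odd transversal; together the two weigh at least the sum of all pair weights, hence at
least `k`. Both are losing, so `k ≤ 2α`. Such a `v` exists as soon as `A` has two elements;
taking `A` of size `k` or `k - 1` leaves only `k ≤ 2`, where `k / 2 ≤ 1 ≤ α` anyway.
-/

theorem roughlyWeighted_of_apply_empty {n : ℕ} {f : Finset (Fin n) → Bool}
    (hf : f ∅ = false) : RoughlyWeighted f n := by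
  refine ⟨fun _ => 1, fun S hS => ?_, fun S _ => ?_⟩
  · have hS : S.Nonempty := nonempty_iff_ne_empty.mpr fun h => by simp [h, hf] at hS
    simpa using hS.card_pos
  · simpa using card_le_univ S

theorem le_mu_of_forall_roughlyWeighted {n : ℕ} {f : Finset (Fin n) → Bool} {c : ℝ}
    (hf : f ∅ = false) (h : ∀ α, 1 ≤ α → RoughlyWeighted f α → c ≤ α) :
    c ≤ mu f := by
  refine le_csInf ⟨max 1 n, le_max_left _ _, ?_⟩ fun α hα => h α hα.1 hα.2
  obtain ⟨w, hwin, hlose⟩ := roughlyWeighted_of_apply_empty hf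
  exact ⟨w, hwin, fun S hS => (hlose S hS).trans (le_max_right _ _)⟩

theorem exists_finset_odd_card {k : ℕ} (hk : 0 < k) :
    ∃ A : Finset (Fin k), (#A : ZMod 2) = 1 ∧ k ≤ #A + 1 := by
  simp only [ZMod.natCast_eq_one_iff_odd]
  rcases Nat.even_or_odd k with hev | hodd
  · refine ⟨univ.erase ⟨0, hk⟩, ?_, ?_⟩ <;>
      rw [card_erase_of_mem (mem_univ _), card_univ, Fintype.card_fin]
    · exact Nat.Even.sub_odd hk hev odd_one
    · omega
  · exact ⟨univ, by simpa using hodd, by simp⟩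

namespace PairGame

variable {k : ℕ}

def voter (b : ZMod 2) (j : Fin k) : Fin (2 * k) := finProdFinEquiv (b, j)

theorem voter_inj {b b' : ZMod 2} {j j' : Fin k} : voter b j = voter b' j' ↔ b = b' ∧ j = j' :=
  finProdFinEquiv.injective.eq_iff.trans Prod.ext_iff

theorem exists_voter_eq (i : Fin (2 * k)) : ∃ b j, voter b j = i :=
  ⟨_, _, finProdFinEquiv.apply_symm_apply i⟩

theorem ne_iff_add_one_eq {a b : ZMod 2} : a ≠ b ↔ a + 1 = b := by
  revert a b; decide

def transversal (v : Fin k → ZMod 2) : Finset (Fin (2 * k)) :=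
  univ.image fun j => voter (v j) j

theorem voter_mem_transversal {v : Fin k → ZMod 2} {b : ZMod 2} {j : Fin k} :
    voter b j ∈ transversal v ↔ v j = b := by
  simp [transversal, voter_inj]

theorem transversal_injective : Function.Injective (transversal (k := k)) := by
  intro v v' h
  funext j
  rw [← voter_mem_transversal, h, voter_mem_transversal]

theorem compl_transversal (v : Fin k → ZMod 2) : (transversal v)ᶜ = transversal (v + 1) := by
  ext i
  obtain ⟨b, j, rfl⟩ := exists_voter_eq i
  simp [voter_mem_transversal, ne_iff_add_one_eq]

theorem sum_transversal (v : Fin k → ZMod 2) (w : Fin (2 * k) → ℝ) :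
    ∑ i ∈ transversal v, w i = ∑ j, w (voter (v j) j) :=
  sum_image fun _ _ _ _ h => (voter_inj.mp h).2

theorem exists_eq_transversal {S : Finset (Fin (2 * k))} (h : ∀ j, ∃! b, voter b j ∈ S) :
    ∃ v, S = transversal v := by
  choose v hv huniq using h
  refine ⟨v, ext fun i => ?_⟩
  obtain ⟨b, j, rfl⟩ := exists_voter_eq i
  rw [voter_mem_transversal]
  exact ⟨fun hb => (huniq j b hb).symm, fun hb => hb ▸ hv j⟩

def game (A : Finset (Fin k)) (S : Finset (Fin (2 * k))) : Bool :=
  decide ((∃ b j, voter b j ∈ S ∧ voter (b + 1) j ∈ S) ∨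
    ∃ v, S = transversal v ∧ ∑ j ∈ A, v j = 0)

variable {A : Finset (Fin k)}

theorem game_eq_true_iff {S : Finset (Fin (2 * k))} :
    game A S = true ↔ (∃ b j, voter b j ∈ S ∧ voter (b + 1) j ∈ S) ∨
      ∃ v, S = transversal v ∧ ∑ j ∈ A, v j = 0 :=
  decide_eq_true_iff

theorem game_pair (b : ZMod 2) (j : Fin k) : game A {voter b j, voter (b + 1) j} = true :=
  game_eq_true_iff.mpr <| .inl ⟨b, j, by simp, by simp⟩

theorem game_transversal_of_sum_eq_one {v : Fin k → ZMod 2} (hv : ∑ j ∈ A, v j = 1) :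
    game A (transversal v) = false := by
  rw [← Bool.not_eq_true, game_eq_true_iff]
  rintro (⟨b, j, h₁, h₂⟩ | ⟨v', hv', hsum⟩)
  · rw [voter_mem_transversal] at h₁ h₂
    simp [h₁] at h₂
  · rw [transversal_injective hv', hsum] at hv
    exact zero_ne_one hv

theorem game_empty (hk : 0 < k) (A : Finset (Fin k)) : game A ∅ = false := by
  rw [← Bool.not_eq_true, game_eq_true_iff]
  rintro (⟨b, j, h, -⟩ | ⟨v, hv, -⟩)
  · simp at h
  · simpa [← hv] using voter_mem_transversal.mpr (rfl : v ⟨0, hk⟩ = _)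

theorem game_mono {S U : Finset (Fin (2 * k))} (hSU : S ⊆ U)
    (hS : game A S = true) : game A U = true := by
  rw [game_eq_true_iff] at hS ⊢
  rcases hS with ⟨b, j, h₁, h₂⟩ | ⟨v, rfl, hv⟩
  · exact .inl ⟨b, j, hSU h₁, hSU h₂⟩
  by_cases hU : U = transversal v
  · exact .inr ⟨v, hU, hv⟩
  obtain ⟨i, hiU, hiv⟩ := exists_of_ssubset (hSU.ssubset_of_ne (Ne.symm hU))
  obtain ⟨b, j, rfl⟩ := exists_voter_eq i
  have hvb : v j + 1 = b := ne_iff_add_one_eq.mp (mt voter_mem_transversal.mpr hiv)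
  exact .inl ⟨v j, j, hSU (voter_mem_transversal.mpr rfl), hvb ▸ hiU⟩

theorem simpleGame_game (hk : 0 < k) (A : Finset (Fin k)) : SimpleGame (game A) :=
  ⟨game_empty hk A, game_eq_true_iff.mpr (.inl ⟨0, ⟨0, hk⟩, mem_univ _, mem_univ _⟩),
    fun _ _ => game_mono⟩

theorem strong_game (hA : (#A : ZMod 2) = 1) : Strong (game A) := by
  intro S hS
  rw [← Bool.not_eq_true, game_eq_true_iff, not_or] at hS
  obtain ⟨hpair, htrans⟩ := hS
  rw [game_eq_true_iff]
  by_cases hmiss : ∃ j, ∀ b, voter b j ∉ S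
  · obtain ⟨j, hj⟩ := hmiss
    exact .inl ⟨0, j, mem_compl.mpr (hj 0), mem_compl.mpr (hj 1)⟩
  push Not at hmiss
  have hunique : ∀ j, ∃! b, voter b j ∈ S := fun j => by
    obtain ⟨b, hb⟩ := hmiss j
    refine ⟨b, hb, fun b' hb' => by_contra fun hne => ?_⟩
    exact hpair ⟨b, j, hb, ne_iff_add_one_eq.mp (Ne.symm hne) ▸ hb'⟩
  obtain ⟨v, rfl⟩ := exists_eq_transversal hunique
  have hv : ∑ j ∈ A, v j = 1 := by
    simpa using (ne_iff_add_one_eq.mp (Ne.symm fun h => htrans ⟨v, rfl, h⟩)).symm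
  refine .inr ⟨v + 1, compl_transversal v, ?_⟩
  simp [sum_add_distrib, hv, hA, CharTwo.add_self_eq_zero]

theorem exists_odd_transversals_agreeing_only_at (hA : (#A : ZMod 2) = 1) (hA2 : 1 < #A)
    {j₀ : Fin k} (hj₀ : j₀ ∈ A) (b : ZMod 2) :
    ∃ v v' : Fin k → ZMod 2, ∑ j ∈ A, v j = 1 ∧ ∑ j ∈ A, v' j = 1 ∧
      v j₀ = b ∧ v' j₀ = b ∧ ∀ j ≠ j₀, v' j = v j + 1 := by
  obtain ⟨j₁, hj₁, hne⟩ := exists_mem_ne hA2 j₀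
  set v : Fin k → ZMod 2 := Pi.single j₀ b + Pi.single j₁ (b + 1)
  have hv : ∑ j ∈ A, v j = 1 := by
    simp only [v, Pi.add_apply, sum_add_distrib, sum_pi_single', hj₀, hj₁, if_true]
    rw [← add_assoc, CharTwo.add_self_eq_zero, zero_add]
  have hvj₀ : v j₀ = b := by simp [v, hne.symm]
  refine ⟨v, v + 1 + Pi.single j₀ 1, hv, ?_, hvj₀, ?_, fun j hj => by simp [hj]⟩
  · simp only [Pi.add_apply, sum_add_distrib, sum_pi_single', hv, hj₀, if_true, Pi.one_apply,
      sum_const, nsmul_eq_mul, mul_one, hA]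
    rw [CharTwo.add_self_eq_zero, zero_add]
  · simp only [Pi.add_apply, Pi.single_eq_same, hvj₀, Pi.one_apply]
    rw [add_assoc, CharTwo.add_self_eq_zero, add_zero]

theorem one_le_weight_pair {w : Fin (2 * k) → ℝ}
    (hwin : ∀ S, game A S = true → 1 ≤ ∑ i ∈ S, w i) (b : ZMod 2) (j : Fin k) :
    1 ≤ w (voter b j) + w (voter (b + 1) j) := by
  have hne : voter b j ≠ voter (b + 1) j := by simp [voter_inj]
  simpa [sum_pair hne] using hwin _ (game_pair b j)

theorem natCast_le_two_mul_of_roughlyWeighted (hA : (#A : ZMod 2) = 1) (hA2 : 1 < #A) {α : ℝ}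
    (h : RoughlyWeighted (game A) α) : (k : ℝ) ≤ 2 * α := by
  obtain ⟨w, hwin, hlose⟩ := h
  obtain ⟨j₀, hj₀⟩ := card_pos.mp (zero_lt_one.trans hA2)
  obtain ⟨b, hb⟩ : ∃ b, w (voter (b + 1) j₀) ≤ w (voter b j₀) := by
    rcases le_total (w (voter 1 j₀)) (w (voter 0 j₀)) with h | h
    exacts [⟨0, h⟩, ⟨1, h⟩]
  obtain ⟨v, v', hv, hv', hvj₀, hv'j₀, hflip⟩ :=
    exists_odd_transversals_agreeing_only_at hA hA2 hj₀ b
  have hpoint : ∀ j, 1 ≤ w (voter (v j) j) + w (voter (v' j) j) := by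
    intro j
    by_cases hj : j = j₀
    · subst hj
      rw [hvj₀, hv'j₀]
      linarith [one_le_weight_pair hwin b j]
    · rw [hflip j hj]
      exact one_le_weight_pair hwin _ j
  calc (k : ℝ) = ∑ _j : Fin k, 1 := by simp
    _ ≤ ∑ j, (w (voter (v j) j) + w (voter (v' j) j)) := sum_le_sum fun j _ => hpoint j
    _ = ∑ i ∈ transversal v, w i + ∑ i ∈ transversal v', w i := by
      rw [sum_transversal, sum_transversal, sum_add_distrib]
    _ ≤ 2 * α := by
      linarith [hlose _ (game_transversal_of_sum_eq_one hv),
        hlose _ (game_transversal_of_sum_eq_one hv')]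

theorem half_le_of_roughlyWeighted (hA : (#A : ZMod 2) = 1) (hkA : k ≤ #A + 1) {α : ℝ}
    (hα : 1 ≤ α) (h : RoughlyWeighted (game A) α) : (k : ℝ) / 2 ≤ α := by
  rcases Nat.lt_or_ge 1 #A with hA2 | hA1
  · linarith [natCast_le_two_mul_of_roughlyWeighted hA hA2 h]
  · have hk : (k : ℝ) ≤ 2 := by exact_mod_cast (by omega : k ≤ 2)
    linarith

end PairGame

/-- for every `k ≥ 2` there is a strong simple game on `2k` voters
with critical threshold value at least `k/2`. -/
theorem exists_strong_simple_game_large_threshold (k : ℕ) (hk : 2 ≤ k) :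
    ∃ χ : Finset (Fin (2 * k)) → Bool, SimpleGame χ ∧ Strong χ ∧
      (k : ℝ) / 2 ≤ mu χ ∧
      ∀ α : ℝ, 1 ≤ α → α < (k : ℝ) / 2 → ¬ RoughlyWeighted χ α := by
  have hk₀ : 0 < k := by omega
  obtain ⟨A, hA, hkA⟩ := exists_finset_odd_card hk₀
  have half_le := fun α hα => PairGame.half_le_of_roughlyWeighted hA hkA (α := α) hα
  exact ⟨PairGame.game A, PairGame.simpleGame_game hk₀ A, PairGame.strong_game hA,
    le_mu_of_forall_roughlyWeighted (PairGame.game_empty hk₀ A) half_le,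
    fun α hα hlt h => (half_le α hα h).not_gt hlt⟩
end
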